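/- arXiv:math/0510276 — 7 statements merged into one kernel-verified Lean document; each statement's English description precedes it below -/
import Mathlib

section
/- Rational CAR mechanisms are dense in the set of CAR mechanisms: for every CAR mechanism π on a finite nonempty set E and every ε > 0, there exists a CAR mechanism π' on E with π'(A) rational for every nonempty subset A of E such that the Euclidean distance between the vectors (π(A))_A and (π'(A))_A is less than ε. -/
/-- A CAR (Coarsening At Random) mechanism on a finite nonempty set `E`:
a function `π` from subsets of `E` to the reals, vanishing on `∅` (so that it is
effectively a function on the nonempty subsets), nonnegative, and such that
for every `x ∈ E` the sum of `π A` over all subsets `A` containing `x` equals `1`. -/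
def IsCAR {E : Type*} [Fintype E] [DecidableEq E] (π : Finset E → ℝ) : Prop :=
  π ∅ = 0 ∧ (∀ A : Finset E, 0 ≤ π A) ∧
    ∀ x : E, ∑ A ∈ Finset.univ.filter (fun A : Finset E => x ∈ A), π A = 1

/-- For a nonnegative real `a` and `δ > 0` there is a rational in `(a - δ, a] ∩ [0, ∞)`. -/
lemma exists_rat_approx (a δ : ℝ) (ha : 0 ≤ a) (hδ : 0 < δ) :
    ∃ q : ℚ, 0 ≤ (q : ℝ) ∧ (q : ℝ) ≤ a ∧ a - δ < (q : ℝ) := by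
  rcases eq_or_lt_of_le ha with h | h
  · exact ⟨0, by norm_num, by push_cast; linarith, by push_cast; linarith⟩
  · obtain ⟨q, hq1, hq2⟩ := exists_rat_btwn (show max (a - δ) 0 < a from max_lt (by linarith) h)
    exact ⟨q, le_trans (le_max_right _ _) hq1.le, hq2.le,
      lt_of_le_of_lt (le_max_left _ _) hq1⟩

lemma filter_singleton_subset_eq {E : Type*} [Fintype E] [DecidableEq E] (x : E) :
    Finset.univ.filter (fun B : Finset E => ({x} : Finset E) ⊆ B ∧ 2 ≤ B.card)
      = (Finset.univ.filter (fun B : Finset E => x ∈ B)).erase {x} := by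
  ext B
  simp only [Finset.mem_filter, Finset.mem_erase, Finset.mem_univ, true_and,
    Finset.singleton_subset_iff]
  constructor
  · rintro ⟨hx, hc⟩
    refine ⟨fun h => ?_, hx⟩
    subst h; simp at hc
  · rintro ⟨hne, hx⟩
    refine ⟨hx, ?_⟩
    rcases Nat.lt_or_ge B.card 2 with h | h
    · interval_cases hB : B.card
      · simp [Finset.card_eq_zero] at hB; subst hB; simp at hx
      · obtain ⟨a, rfl⟩ := Finset.card_eq_one.mp hB
        simp only [Finset.mem_singleton] at hx
        subst hx; exact absurd rfl hne
    · exact h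

/-- Rational CAR mechanisms are dense in the set of CAR mechanisms: every CAR mechanism
can be approximated arbitrarily well (in Euclidean distance on the vectors of values)
by a CAR mechanism all of whose values are rational. -/
theorem rational_car_dense {E : Type*} [Fintype E] [DecidableEq E] [Nonempty E]
    (π : Finset E → ℝ) (hπ : IsCAR π) (ε : ℝ) (hε : 0 < ε) :
    ∃ π' : Finset E → ℝ, IsCAR π' ∧ (∀ A : Finset E, ∃ q : ℚ, π' A = (q : ℝ)) ∧
      Real.sqrt (∑ A : Finset E, (π A - π' A) ^ 2) < ε := by
  obtain ⟨hπ0, hπnn, hπsum⟩ := hπ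
  set N : ℕ := Fintype.card (Finset E) with hNdef
  have hN2 : 2 ≤ N := by
    rw [hNdef, Fintype.card_finset]
    calc 2 = 2 ^ 1 := by norm_num
    _ ≤ 2 ^ Fintype.card E := Nat.pow_le_pow_right (by norm_num) Fintype.card_pos
  have hNR : (2 : ℝ) ≤ (N : ℝ) := by exact_mod_cast hN2
  have hNpos : (0 : ℝ) < N := by linarith
  set δ : ℝ := ε / (N ^ 2) with hδdef
  have hδpos : 0 < δ := div_pos hε (by positivity)
  -- choose rational approximations from below
  have hch : ∀ A : Finset E, ∃ q : ℚ, 0 ≤ (q : ℝ) ∧ (q : ℝ) ≤ π A ∧ π A - δ < (q : ℝ) :=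
    fun A => exists_rat_approx (π A) δ (hπnn A) hδpos
  choose f hf0 hf1 hf2 using hch
  -- the rational CAR mechanism
  set π' : Finset E → ℝ := fun A =>
    if 2 ≤ A.card then (f A : ℝ)
    else if A.card = 1 then
      1 - ∑ B ∈ Finset.univ.filter (fun B : Finset E => A ⊆ B ∧ 2 ≤ B.card), (f B : ℝ)
    else 0 with hπ'def
  -- values on singletons
  have hsing : ∀ x : E, π' {x} =
      1 - ∑ B ∈ (Finset.univ.filter (fun B : Finset E => x ∈ B)).erase {x}, (f B : ℝ) := by
    intro x
    have : ¬ (2 ≤ ({x} : Finset E).card) := by simp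
    simp only [hπ'def, this, if_false, Finset.card_singleton, if_pos rfl,
      filter_singleton_subset_eq x]
    norm_num
  -- membership of {x} in the filter
  have hmem : ∀ x : E, ({x} : Finset E) ∈ Finset.univ.filter (fun B : Finset E => x ∈ B) := by
    intro x; simp
  -- values on sets of card ≥ 2
  have hbig : ∀ A : Finset E, 2 ≤ A.card → π' A = (f A : ℝ) := by
    intro A hA; simp only [hπ'def, if_pos hA]
  -- π' A = f A on the erased filter set
  have herase : ∀ x : E, ∀ B ∈ (Finset.univ.filter (fun B : Finset E => x ∈ B)).erase {x},
      π' B = (f B : ℝ) := by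
    intro x B hB
    rw [Finset.mem_erase, Finset.mem_filter] at hB
    apply hbig
    have hx : x ∈ B := hB.2.2
    rcases Nat.lt_or_ge B.card 2 with h | h
    · interval_cases hBc : B.card
      · rw [Finset.card_eq_zero] at hBc; subst hBc; simp at hx
      · obtain ⟨a, rfl⟩ := Finset.card_eq_one.mp hBc
        simp only [Finset.mem_singleton] at hx
        subst hx; exact absurd rfl hB.1
    · exact h
  -- splitting lemma for any g
  have hsplit : ∀ (g : Finset E → ℝ) (x : E),
      ∑ A ∈ Finset.univ.filter (fun A : Finset E => x ∈ A), g A =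
        g {x} + ∑ B ∈ (Finset.univ.filter (fun B : Finset E => x ∈ B)).erase {x}, g B := by
    intro g x
    exact (Finset.add_sum_erase _ g (hmem x)).symm
  -- the CAR value identity for π on singletons
  have hπsing : ∀ x : E, π {x} =
      1 - ∑ B ∈ (Finset.univ.filter (fun B : Finset E => x ∈ B)).erase {x}, π B := by
    intro x
    have := hπsum x
    rw [hsplit π x] at this
    linarith
  -- the coordinatewise bound
  have hNδ : 0 ≤ (N : ℝ) * δ := by positivity
  have hbound : ∀ A : Finset E, -( (N:ℝ) * δ) ≤ π A - π' A ∧ π A - π' A ≤ (N:ℝ) * δ := by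
    intro A
    rcases Nat.lt_or_ge A.card 2 with h | h
    · interval_cases hAc : A.card
      · rw [Finset.card_eq_zero] at hAc; subst hAc
        have : π' (∅ : Finset E) = 0 := by simp [hπ'def]
        rw [this, hπ0]
        constructor <;> simp [hNδ]
      · obtain ⟨x, rfl⟩ := Finset.card_eq_one.mp hAc
        rw [hsing x, hπsing x]
        have hsum_le : ∑ B ∈ (Finset.univ.filter (fun B : Finset E => x ∈ B)).erase {x},
            (π B - (f B : ℝ)) ≤ (N : ℝ) * δ := by
          have h1 : ∑ B ∈ (Finset.univ.filter (fun B : Finset E => x ∈ B)).erase {x},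
              (π B - (f B : ℝ)) ≤
              ((Finset.univ.filter (fun B : Finset E => x ∈ B)).erase {x}).card • δ :=
            Finset.sum_le_card_nsmul _ _ δ (fun B _ => by have := hf2 B; linarith)
          have h2 : (((Finset.univ.filter (fun B : Finset E => x ∈ B)).erase {x}).card • δ)
              ≤ (N : ℝ) * δ := by
            rw [nsmul_eq_mul]
            apply mul_le_mul_of_nonneg_right _ hδpos.le
            have : ((Finset.univ.filter (fun B : Finset E => x ∈ B)).erase {x}).card ≤ N := by
              calc ((Finset.univ.filter (fun B : Finset E => x ∈ B)).erase {x}).card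
                  ≤ (Finset.univ : Finset (Finset E)).card :=
                    Finset.card_le_card (fun B hB => Finset.mem_univ B)
                _ = N := Finset.card_univ
            exact_mod_cast this
          linarith
        have hsum_ge : 0 ≤ ∑ B ∈ (Finset.univ.filter (fun B : Finset E => x ∈ B)).erase {x},
            (π B - (f B : ℝ)) :=
          Finset.sum_nonneg (fun B _ => by have := hf1 B; linarith)
        rw [Finset.sum_sub_distrib] at hsum_le hsum_ge
        constructor <;> [linarith; linarith]
    · rw [hbig A h]
      have := hf1 A; have := hf2 A
      constructor
      · have : (0:ℝ) ≤ π A - f A := by linarith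
        linarith
      · have hδN : δ ≤ (N:ℝ) * δ := by nlinarith
        linarith
  refine ⟨π', ⟨?_, ?_, ?_⟩, ?_, ?_⟩
  · -- π' ∅ = 0
    simp [hπ'def]
  · -- nonnegativity
    intro A
    rcases Nat.lt_or_ge A.card 2 with h | h
    · interval_cases hAc : A.card
      · rw [Finset.card_eq_zero] at hAc; subst hAc; simp [hπ'def]
      · obtain ⟨x, rfl⟩ := Finset.card_eq_one.mp hAc
        rw [hsing x]
        have hπx : 0 ≤ π {x} := hπnn {x}
        rw [hπsing x] at hπx
        have hle : ∑ B ∈ (Finset.univ.filter (fun B : Finset E => x ∈ B)).erase {x}, (f B : ℝ)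
            ≤ ∑ B ∈ (Finset.univ.filter (fun B : Finset E => x ∈ B)).erase {x}, π B :=
          Finset.sum_le_sum (fun B _ => hf1 B)
        linarith
    · rw [hbig A h]; exact hf0 A
  · -- the sum condition
    intro x
    rw [hsplit π' x, hsing x,
      Finset.sum_congr rfl (herase x)]
    ring
  · -- rationality
    intro A
    rcases Nat.lt_or_ge A.card 2 with h | h
    · interval_cases hAc : A.card
      · rw [Finset.card_eq_zero] at hAc; subst hAc
        exact ⟨0, by simp [hπ'def]⟩
      · obtain ⟨x, rfl⟩ := Finset.card_eq_one.mp hAc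
        refine ⟨1 - ∑ B ∈ (Finset.univ.filter (fun B : Finset E => x ∈ B)).erase {x}, f B, ?_⟩
        rw [hsing x]; push_cast; ring
    · exact ⟨f A, hbig A h⟩
  · -- the distance bound
    rw [Real.sqrt_lt' hε]
    have hterm : ∀ A : Finset E, (π A - π' A) ^ 2 ≤ ((N:ℝ) * δ) ^ 2 := by
      intro A
      exact sq_le_sq' (hbound A).1 (hbound A).2
    have hsum : ∑ A : Finset E, (π A - π' A) ^ 2 ≤ (N : ℝ) * ((N:ℝ) * δ) ^ 2 := by
      calc ∑ A : Finset E, (π A - π' A) ^ 2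
          ≤ (Finset.univ : Finset (Finset E)).card • (((N:ℝ) * δ) ^ 2) :=
            Finset.sum_le_card_nsmul _ _ _ (fun A _ => hterm A)
        _ = (N : ℝ) * ((N:ℝ) * δ) ^ 2 := by rw [nsmul_eq_mul, Finset.card_univ]
    have hkey : (N : ℝ) * ((N:ℝ) * δ) ^ 2 < ε ^ 2 := by
      have hNδε : (N : ℝ) * δ = ε / N := by
        rw [hδdef]; field_simp
      rw [hNδε, div_pow]
      have heq : (N : ℝ) * (ε ^ 2 / (N:ℝ) ^ 2) = ε ^ 2 / N := by
        field_simp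
      rw [heq]
      exact div_lt_self (by positivity) (by linarith)
    linarith
end

section
/- Every CAR mechanism on a finite nonempty set E is a finite convex combination of rational CAR mechanisms; that is, for every CAR mechanism π there exist finitely many CAR mechanisms π₁,…,π_p, each taking only rational values, and nonnegative weights λ₁,…,λ_p summing to 1 such that π = λ₁π₁ + … + λ_pπ_p. -/
/-- The conclusion: `π` is a finite convex combination of rational CAR mechanisms. -/
def CARConcl {E : Type*} [Fintype E] [DecidableEq E] (π : Finset E → ℝ) : Prop :=
  ∃ (p : ℕ) (πs : Fin p → Finset E → ℝ) (lam : Fin p → ℝ),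
    (∀ i, IsCAR (πs i)) ∧
    (∀ i, ∀ A : Finset E, ∃ q : ℚ, πs i A = (q : ℝ)) ∧
    (∀ i, 0 ≤ lam i) ∧ (∑ i, lam i = 1) ∧
    ∀ A : Finset E, π A = ∑ i, lam i * πs i A

lemma carConcl_of_rat {E : Type*} [Fintype E] [DecidableEq E] {π : Finset E → ℝ}
    (hπ : IsCAR π) (hr : ∀ A, ∃ q : ℚ, π A = (q : ℝ)) : CARConcl π :=
  ⟨1, fun _ => π, fun _ => 1, fun _ => hπ, fun _ => hr, fun _ => zero_le_one,
    by simp, by intro A; simp⟩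

lemma carConcl_mix2 {E : Type*} [Fintype E] [DecidableEq E] {π π₁ π₂ : Finset E → ℝ} {a : ℝ}
    (ha0 : 0 ≤ a) (ha1 : a ≤ 1) (hdec : ∀ A, π A = a * π₁ A + (1 - a) * π₂ A)
    (h1 : CARConcl π₁) (h2 : CARConcl π₂) : CARConcl π := by
  obtain ⟨p₁, πs₁, l₁, hcar₁, hq₁, hl₁, hs₁, hd₁⟩ := h1
  obtain ⟨p₂, πs₂, l₂, hcar₂, hq₂, hl₂, hs₂, hd₂⟩ := h2
  refine ⟨p₁ + p₂, Fin.append πs₁ πs₂,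
    Fin.append (fun i => a * l₁ i) (fun i => (1 - a) * l₂ i), ?_, ?_, ?_, ?_, ?_⟩
  · intro i
    refine Fin.addCases (fun j => ?_) (fun j => ?_) i
    · simpa [Fin.append_left] using hcar₁ j
    · simpa [Fin.append_right] using hcar₂ j
  · intro i
    refine Fin.addCases (fun j => ?_) (fun j => ?_) i
    · simpa [Fin.append_left] using hq₁ j
    · simpa [Fin.append_right] using hq₂ j
  · intro i
    refine Fin.addCases (fun j => ?_) (fun j => ?_) i
    · simpa [Fin.append_left] using mul_nonneg ha0 (hl₁ j)
    · simpa [Fin.append_right] using mul_nonneg (by linarith) (hl₂ j)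
  · rw [Fin.sum_univ_add]
    simp only [Fin.append_left, Fin.append_right, ← Finset.mul_sum, hs₁, hs₂]
    ring
  · intro A
    rw [hdec A, Fin.sum_univ_add]
    simp only [Fin.append_left, Fin.append_right]
    rw [hd₁ A, hd₂ A, Finset.mul_sum, Finset.mul_sum]
    congr 1 <;> exact Finset.sum_congr rfl (fun i _ => by ring)

set_option maxHeartbeats 1000000 in
open Finset Submodule Module in
lemma carConcl_aux {E : Type*} [Fintype E] [DecidableEq E] :
    ∀ (n : ℕ) (π : Finset E → ℝ), IsCAR π →
      finrank ℚ (span ℚ (insert (1 : ℝ) (Set.range π))) ≤ n → CARConcl π := by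
  intro n
  induction n with
  | zero =>
    intro π hπ hrk
    exfalso
    haveI : FiniteDimensional ℚ (span ℚ (insert (1 : ℝ) (Set.range π))) :=
      FiniteDimensional.span_of_finite ℚ ((Set.finite_range π).insert 1)
    have h1V : (1 : ℝ) ∈ span ℚ (insert (1 : ℝ) (Set.range π)) :=
      subset_span (Set.mem_insert _ _)
    have hz : span ℚ (insert (1 : ℝ) (Set.range π)) = ⊥ :=
      Submodule.finrank_eq_zero.1 (Nat.le_zero.1 hrk)
    rw [hz] at h1V
    exact one_ne_zero (Submodule.mem_bot ℚ |>.1 h1V)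
  | succ n ih =>
    intro π hπ hrk
    classical
    set V := span ℚ (insert (1 : ℝ) (Set.range π)) with hVdef
    haveI : FiniteDimensional ℚ V :=
      FiniteDimensional.span_of_finite ℚ ((Set.finite_range π).insert 1)
    have h1V : (1 : ℝ) ∈ V := subset_span (Set.mem_insert _ _)
    have hmem : ∀ A, π A ∈ V := fun A =>
      subset_span (Set.mem_insert_of_mem _ ⟨A, rfl⟩)
    by_cases hr : ∀ A, ∃ q : ℚ, π A = (q : ℝ)
    · exact carConcl_of_rat hπ hr
    · -- set up the functional φ on V with φ 1 = 0, φ ≠ 0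
      set u : V := ⟨1, h1V⟩ with hudef
      have hlt : span ℚ {u} < ⊤ := by
        refine lt_top_iff_ne_top.2 fun htop => hr fun A => ?_
        have : (⟨π A, hmem A⟩ : V) ∈ span ℚ {u} := htop ▸ Submodule.mem_top
        rcases Submodule.mem_span_singleton.1 this with ⟨q, hq⟩
        refine ⟨q, ?_⟩
        have := congrArg Subtype.val hq
        simpa [hudef, Rat.smul_one_eq_cast] using this.symm
      obtain ⟨f, hf0, hker⟩ := Submodule.exists_le_ker_of_lt_top _ hlt
      obtain ⟨y, hy⟩ : ∃ y, f y ≠ 0 := by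
        by_contra h
        push_neg at h
        exact hf0 (LinearMap.ext fun x => by simp [h x])
      set φ : V →ₗ[ℚ] ℚ := (f y)⁻¹ • f with hφdef
      have hφu : φ u = 0 := by
        have : f u = 0 := hker (Submodule.mem_span_singleton_self u)
        simp [hφdef, this]
      have hφy : φ y = 1 := by
        simp [hφdef, inv_mul_cancel₀ hy]
      set e : ℝ := (y : ℝ) with hedef
      set c : Finset E → ℚ := fun A => φ ⟨π A, hmem A⟩ with hcdef
      set K : Submodule ℚ ℝ := (LinearMap.ker φ).map V.subtype with hKdef
      haveI : Module.Finite ℚ (LinearMap.ker φ) := inferInstance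
      haveI : Module.Finite ℚ K := Module.Finite.map _ _
      have h1K : (1 : ℝ) ∈ K := ⟨u, by simpa [LinearMap.mem_ker] using hφu, rfl⟩
      have hrkK : finrank ℚ K + 1 = finrank ℚ V := by
        have h1 : finrank ℚ K = finrank ℚ (LinearMap.ker φ) :=
          Submodule.finrank_map_subtype_eq V _
        have h2 : LinearMap.range φ = ⊤ := by
          rw [LinearMap.range_eq_top]
          intro q
          exact ⟨q • y, by simp [map_smul, hφy]⟩
        have h3 := LinearMap.finrank_range_add_finrank_ker φ
        rw [h2, finrank_top, finrank_self] at h3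
        omega
      -- c vanishes where π does
      have hc0 : ∀ A, π A = 0 → c A = 0 := by
        intro A h
        have hz : (⟨π A, hmem A⟩ : V) = 0 := Subtype.ext (by simp [h])
        simp [hcdef, hz]
      -- sum constraints for c
      have hsumcQ : ∀ x : E, ∑ A ∈ Finset.univ.filter (fun A : Finset E => x ∈ A), c A = 0 := by
        intro x
        have hS : (∑ A ∈ Finset.univ.filter (fun A : Finset E => x ∈ A),
            (⟨π A, hmem A⟩ : V)) = u := by
          apply Subtype.ext
          push_cast
          simpa using hπ.2.2 x
        calc ∑ A ∈ Finset.univ.filter (fun A : Finset E => x ∈ A), c A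
            = φ (∑ A ∈ Finset.univ.filter (fun A : Finset E => x ∈ A),
                (⟨π A, hmem A⟩ : V)) := (map_sum φ _ _).symm
          _ = φ u := by rw [hS]
          _ = 0 := hφu
      -- there is some A with c A ≠ 0
      have hTne : ∃ A₀, c A₀ ≠ 0 := by
        by_contra h
        push_neg at h
        have hVK : V ≤ K := by
          rw [hVdef]
          refine span_le.2 ?_
          rintro z (rfl | ⟨A, rfl⟩)
          · exact h1K
          · exact ⟨⟨π A, hmem A⟩, by simpa [LinearMap.mem_ker, ← hcdef] using h A, rfl⟩
        have := Submodule.finrank_mono hVK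
        omega
      obtain ⟨A₀, hA₀⟩ := hTne
      set T : Finset (Finset E) := Finset.univ.filter (fun A => c A ≠ 0) with hTdef
      have hA₀T : A₀ ∈ T := by simp [hTdef, hA₀]
      have hTnonempty : T.Nonempty := ⟨A₀, hA₀T⟩
      have hπpos : ∀ A ∈ T, 0 < π A := by
        intro A hA
        rcases lt_or_eq_of_le (hπ.2.1 A) with h | h
        · exact h
        · exfalso
          have := hc0 A h.symm
          simp [hTdef] at hA
          exact hA this
      set δ : ℝ := T.inf' hTnonempty (fun A => π A / |(c A : ℝ)|) with hδdef
      have hδpos : 0 < δ := by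
        rw [hδdef, Finset.lt_inf'_iff]
        intro A hA
        have hc : (0:ℝ) < |(c A : ℝ)| := by
          have : c A ≠ 0 := by simpa [hTdef] using hA
          positivity
        exact div_pos (hπpos A hA) hc
      have hδle : ∀ A ∈ T, δ ≤ π A / |(c A : ℝ)| := fun A hA => Finset.inf'_le _ hA
      -- the perturbed mechanisms
      set πp : ℝ → Finset E → ℝ := fun s A => π A + (c A : ℝ) * (s - e) with hπpdef
      have hcar : ∀ s : ℝ, |s - e| ≤ δ → IsCAR (πp s) := by
        intro s hs
        refine ⟨?_, ?_, ?_⟩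
        · simp [hπpdef, hπ.1, hc0 ∅ hπ.1]
        · intro A
          by_cases hA : c A = 0
          · simp [hπpdef, hA, hπ.2.1 A]
          · have hAT : A ∈ T := by simp [hTdef, hA]
            have h1 : |(c A : ℝ)| * δ ≤ π A := by
              have hcpos : (0:ℝ) < |(c A : ℝ)| := by positivity
              have := hδle A hAT
              calc |(c A : ℝ)| * δ ≤ |(c A : ℝ)| * (π A / |(c A : ℝ)|) := by
                    exact mul_le_mul_of_nonneg_left this (le_of_lt hcpos)
                _ = π A := by field_simp
            have h2 : (c A : ℝ) * (s - e) ≥ -(|(c A : ℝ)| * δ) := by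
              have : |(c A : ℝ) * (s - e)| ≤ |(c A : ℝ)| * δ := by
                rw [abs_mul]
                exact mul_le_mul_of_nonneg_left hs (abs_nonneg _)
              linarith [neg_abs_le ((c A : ℝ) * (s - e))]
            simp only [hπpdef]
            linarith
        · intro x
          simp only [hπpdef]
          rw [Finset.sum_add_distrib, ← Finset.sum_mul, hπ.2.2 x]
          have : ∑ A ∈ Finset.univ.filter (fun A : Finset E => x ∈ A), (c A : ℝ) = 0 := by
            rw [← Rat.cast_sum, hsumcQ x]
            simp
          rw [this]
          ring
      -- the perturbed mechanisms at rational parameters have smaller span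
      have hspan : ∀ q : ℚ, finrank ℚ (span ℚ (insert (1 : ℝ) (Set.range (πp (q : ℝ))))) ≤ n := by
        intro q
        have hle : span ℚ (insert (1 : ℝ) (Set.range (πp (q : ℝ)))) ≤ K := by
          refine span_le.2 ?_
          rintro z (rfl | ⟨A, rfl⟩)
          · exact h1K
          · refine ⟨⟨π A, hmem A⟩ - c A • y + (c A * q) • u, ?_, ?_⟩
            · refine LinearMap.mem_ker.2 ?_
              have hcA : φ ⟨π A, hmem A⟩ = c A := rfl
              simp [map_add, map_sub, map_smul, hφy, hφu, hcA]
            · show ((⟨π A, hmem A⟩ - c A • y + (c A * q) • u : V) : ℝ) = _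
              simp only [hπpdef, hudef, hedef, Submodule.coe_add, Submodule.coe_sub,
                Submodule.coe_smul_of_tower, Rat.smul_def]
              push_cast
              ring
        have := Submodule.finrank_mono hle
        omega
      -- choose rational points on both sides of e
      obtain ⟨q₁, hq₁l, hq₁r⟩ := exists_rat_btwn (show e - δ < e by linarith)
      obtain ⟨q₂, hq₂l, hq₂r⟩ := exists_rat_btwn (show e < e + δ by linarith)
      have hns : (q₂ : ℝ) - q₁ > 0 := by linarith
      set a : ℝ := ((q₂ : ℝ) - e) / ((q₂ : ℝ) - q₁) with hadef
      have ha0 : 0 ≤ a := by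
        apply div_nonneg <;> linarith
      have ha1 : a ≤ 1 := by
        rw [hadef, div_le_one hns]
        linarith
      have hdec : ∀ A, π A = a * πp q₁ A + (1 - a) * πp q₂ A := by
        intro A
        have key : a * ((q₁ : ℝ) - e) + (1 - a) * ((q₂ : ℝ) - e) = 0 := by
          rw [hadef]
          field_simp
          ring
        simp only [hπpdef]
        have expand : a * (π A + (c A : ℝ) * ((q₁:ℝ) - e)) + (1 - a) * (π A + (c A : ℝ) * ((q₂:ℝ) - e))
            = π A + (c A : ℝ) * (a * ((q₁ : ℝ) - e) + (1 - a) * ((q₂ : ℝ) - e)) := by ring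
        rw [expand, key]
        ring
      have h1 : CARConcl (πp q₁) := by
        apply ih
        · apply hcar
          rw [abs_le]
          constructor <;> linarith
        · exact hspan q₁
      have h2 : CARConcl (πp q₂) := by
        apply ih
        · apply hcar
          rw [abs_le]
          constructor <;> linarith
        · exact hspan q₂
      exact carConcl_mix2 ha0 ha1 hdec h1 h2

/-- Every CAR mechanism is a finite convex combination of rational CAR mechanisms,
i.e. of CAR mechanisms taking only rational values. -/
theorem car_is_mixture_of_rational {E : Type*} [Fintype E] [DecidableEq E] [Nonempty E]
    (π : Finset E → ℝ) (hπ : IsCAR π) :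
    ∃ (p : ℕ) (πs : Fin p → Finset E → ℝ) (lam : Fin p → ℝ),
      (∀ i, IsCAR (πs i)) ∧
      (∀ i, ∀ A : Finset E, ∃ q : ℚ, πs i A = (q : ℝ)) ∧
      (∀ i, 0 ≤ lam i) ∧ (∑ i, lam i = 1) ∧
      ∀ A : Finset E, π A = ∑ i, lam i * πs i A := by
  exact carConcl_aux (Module.finrank ℚ
    (Submodule.span ℚ (insert (1 : ℝ) (Set.range π)))) π hπ le_rfl
end

section
/- Every extreme CAR mechanism is rational: if π is a CAR mechanism on a finite nonempty set E and π is the unique CAR mechanism on E with its support, then π(A) is a rational number for every nonempty subset A of E. -/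
/-- The support of a coarsening mechanism: the collection of subsets with positive mass. -/
def carSupport {E : Type*} (π : Finset E → ℝ) : Set (Finset E) := {A | 0 < π A}

/-- Every extreme CAR mechanism is rational: if `π` is a CAR mechanism which is the
unique CAR mechanism with its support, then all its values are rational numbers. -/
theorem extreme_car_is_rational {E : Type*} [Fintype E] [DecidableEq E] [Nonempty E]
    (π : Finset E → ℝ) (hπ : IsCAR π)
    (hext : ∀ π' : Finset E → ℝ, IsCAR π' → carSupport π' = carSupport π → π' = π) :
    ∀ A : Finset E, ∃ q : ℚ, π A = (q : ℝ) := by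
  classical
  obtain ⟨hπ0, hπnn, hπsum⟩ := hπ
  set S : Finset (Finset E) := Finset.univ.filter (fun A => 0 < π A) with hS
  have hmemS : ∀ A : Finset E, A ∈ S ↔ 0 < π A := by
    intro A; simp [hS]
  have hvanish : ∀ A : Finset E, A ∉ S → π A = 0 := by
    intro A hA
    exact le_antisymm (not_lt.1 (fun h => hA ((hmemS A).2 h))) (hπnn A)
  -- Kernel lemma
  have hker : ∀ z : Finset E → ℝ, (∀ A, A ∉ S → z A = 0) →
      (∀ x : E, ∑ A ∈ Finset.univ.filter (fun A : Finset E => x ∈ A), z A = 0) →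
      ∀ A, z A = 0 := by
    intro z hz0 hzsum
    rcases S.eq_empty_or_nonempty with hSe | hSne
    · intro A; exact hz0 A (by simp [hSe])
    set ε : ℝ := S.inf' hSne (fun A => π A / (|z A| + 1)) with hε
    have hεpos : 0 < ε := by
      rw [hε, Finset.lt_inf'_iff]
      intro A hA
      exact div_pos ((hmemS A).1 hA) (by positivity)
    have hεle : ∀ A ∈ S, ε * |z A| < π A := by
      intro A hA
      have h1 : ε ≤ π A / (|z A| + 1) := Finset.inf'_le _ hA
      have h2 : ε * (|z A| + 1) ≤ π A := by
        rw [← div_mul_cancel₀ (π A) (show (|z A| + 1) ≠ 0 by positivity)]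
        exact mul_le_mul_of_nonneg_right h1 (by positivity)
      nlinarith [abs_nonneg (z A)]
    set π' : Finset E → ℝ := fun A => π A + ε * z A with hπ'
    have hπ'S : ∀ A ∈ S, 0 < π' A := by
      intro A hA
      have := hεle A hA
      have := neg_abs_le (z A)
      have := abs_nonneg (z A)
      simp only [hπ']
      nlinarith
    have hπ'nS : ∀ A, A ∉ S → π' A = 0 := by
      intro A hA
      simp [hπ', hvanish A hA, hz0 A hA]
    have hcar' : IsCAR π' := by
      refine ⟨?_, ?_, ?_⟩
      · exact hπ'nS ∅ (by simp [hmemS, hπ0])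
      · intro A
        by_cases hA : A ∈ S
        · exact (hπ'S A hA).le
        · exact (hπ'nS A hA).ge
      · intro x
        simp only [hπ', Finset.sum_add_distrib, ← Finset.mul_sum, hπsum x, hzsum x,
          mul_zero, add_zero]
    have hsupp : carSupport π' = carSupport π := by
      ext A
      simp only [carSupport, Set.mem_setOf_eq]
      constructor
      · intro h
        by_contra hA
        rw [hπ'nS A (fun hmem => hA ((hmemS A).1 hmem))] at h
        exact lt_irrefl _ h
      · intro h
        exact hπ'S A ((hmemS A).2 h)
    have heq := hext π' hcar' hsupp
    intro A
    have := congrFun heq A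
    simp only [hπ'] at this
    have : ε * z A = 0 := by linarith
    rcases mul_eq_zero.1 this with h | h
    · exact absurd h (ne_of_gt hεpos)
    · exact h
  -- columns over ℚ
  set col : {A : Finset E // A ∈ S} → (E → ℚ) :=
    fun A e => if e ∈ A.1 then 1 else 0 with hcol
  have hbspan : (fun _ : E => (1 : ℚ)) ∈ Submodule.span ℚ (Set.range col) := by
    by_contra hb
    set V := Submodule.span ℚ (Set.range col) with hV
    have hmk : Submodule.Quotient.mk (p := V) (fun _ : E => (1 : ℚ)) ≠ 0 := by
      rw [Ne, Submodule.Quotient.mk_eq_zero]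
      exact hb
    obtain ⟨φ, hφ⟩ : ∃ φ : Module.Dual ℚ ((E → ℚ) ⧸ V),
        φ (Submodule.Quotient.mk (fun _ : E => (1 : ℚ))) ≠ 0 := by
      by_contra hφ
      push_neg at hφ
      exact hmk ((Module.forall_dual_apply_eq_zero_iff ℚ _).1 hφ)
    set ψ : (E → ℚ) →ₗ[ℚ] ℚ := φ.comp (V.mkQ) with hψ
    have hψcol : ∀ A, ψ (col A) = 0 := by
      intro A
      have : col A ∈ V := Submodule.subset_span ⟨A, rfl⟩
      simp [hψ, Submodule.mkQ_apply, (Submodule.Quotient.mk_eq_zero V).2 this]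
    have hψb : ψ (fun _ : E => (1 : ℚ)) ≠ 0 := hφ
    -- represent ψ as a vector c
    set c : E → ℚ := fun e => ψ (fun j => if e = j then 1 else 0) with hc
    have hrep : ∀ w : E → ℚ, ψ w = ∑ e : E, w e * c e := by
      intro w
      conv_lhs => rw [pi_eq_sum_univ w]
      rw [map_sum]
      refine Finset.sum_congr rfl fun e _ => ?_
      rw [map_smul, smul_eq_mul, hc]
    -- contradiction via real solution
    have key : ∑ e : E, (c e : ℝ) *
        (∑ A ∈ Finset.univ.filter (fun A : Finset E => e ∈ A), π A) = 0 := by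
      have swap : ∑ e : E, (c e : ℝ) *
          (∑ A ∈ Finset.univ.filter (fun A : Finset E => e ∈ A), π A)
          = ∑ A : Finset E, π A * ∑ e ∈ A, (c e : ℝ) := by
        simp only [Finset.mul_sum, Finset.sum_filter]
        rw [Finset.sum_comm]
        refine Finset.sum_congr rfl fun A _ => ?_
        simp only [mul_ite, mul_zero]
        rw [Finset.sum_ite_mem, Finset.univ_inter]
        exact Finset.sum_congr rfl fun e _ => mul_comm _ _
      rw [swap]
      refine Finset.sum_eq_zero fun A _ => ?_
      by_cases hA : A ∈ S
      · have : ∑ e ∈ A, c e = 0 := by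
          have := hψcol ⟨A, hA⟩
          rw [hrep] at this
          simpa [hcol, Finset.sum_filter, mul_comm] using this
        have : ∑ e ∈ A, (c e : ℝ) = 0 := by
          rw [← Rat.cast_sum] at *
          exact_mod_cast this
        rw [this, mul_zero]
      · rw [hvanish A hA, zero_mul]
    have key2 : ∑ e : E, (c e : ℝ) *
        (∑ A ∈ Finset.univ.filter (fun A : Finset E => e ∈ A), π A) = ∑ e : E, (c e : ℝ) := by
      refine Finset.sum_congr rfl fun e _ => ?_
      rw [hπsum e, mul_one]
    have hsum_c : ∑ e : E, c e ≠ 0 := by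
      have := hψb
      rw [hrep] at this
      simpa using this
    rw [key2] at key
    have : ((∑ e : E, c e : ℚ) : ℝ) = 0 := by rw [Rat.cast_sum]; exact key
    exact hsum_c (by exact_mod_cast this)
  -- extract rational solution
  rw [Submodule.mem_span_range_iff_exists_fun] at hbspan
  obtain ⟨q, hq⟩ := hbspan
  set Q : Finset E → ℚ := fun A => if h : A ∈ S then q ⟨A, h⟩ else 0 with hQ
  have hQsum : ∀ x : E, ∑ A ∈ Finset.univ.filter (fun A : Finset E => x ∈ A), (Q A : ℝ) = 1 := by
    intro x
    have := congrFun hq x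
    simp only [Finset.sum_apply, Pi.smul_apply, smul_eq_mul, hcol] at this
    -- this : ∑ A : {A // A ∈ S}, q A * (if x ∈ A.1 then 1 else 0) = 1
    have h2 : ∑ A ∈ S, Q A * (if x ∈ A then 1 else 0) = 1 := by
      conv_rhs => rw [← this]
      rw [← Finset.sum_coe_sort S (fun A => Q A * (if x ∈ A then 1 else 0))]
      refine Finset.sum_congr rfl fun A _ => ?_
      simp only [hQ, A.2, dif_pos]
    have h3 : ∑ A ∈ Finset.univ.filter (fun A : Finset E => x ∈ A), Q A = 1 := by
      rw [← h2]
      rw [Finset.sum_filter]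
      rw [← Finset.sum_subset (Finset.subset_univ S)]
      · exact Finset.sum_congr rfl fun A _ => by split <;> simp
      · intro A _ hA
        simp [hQ, hA]
    rw [← Rat.cast_sum, h3, Rat.cast_one]
  have hz := hker (fun A => π A - (Q A : ℝ))
    (fun A hA => by simp [hvanish A hA, hQ, hA])
    (fun x => by
      rw [Finset.sum_sub_distrib, hπsum x, hQsum x, sub_self])
  intro A
  exact ⟨Q A, by have := hz A; linarith⟩
end

section
/- For every odd n > 0, each entry of the unique solution z of S_n z = 1 is strictly positive; consequently F_n · z_i is a positive integer for each i, where z = (F_{n-1}/F_n, …, F_1/F_n, 1/F_n). -/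
/-! Put `u_n = F_n • zsol n = (F_{n-1}, …, F_1, 1)`. For odd `n`, `S_{n+2}` sends `(a, b, w)` to
`(b + ∑ w, a + b, a + S_n w)`, and `u_{n+2} = (F_{n+1}, F_n, u_n)`; with `∑ u_n = F_{n+1}`
this gives `S_n u_n = F_n • 1` by induction. The same block form shows that `S_{n+2}` is
injective: `S_{n+2} (a, b, w) = 0` forces `S_n w = b • 1`, so `w = b • zsol n`, and the first
row becomes `b (1 + ∑ zsol n) = 0`, whence `b = 0` because `zsol n` is positive. -/

/-- The matrices `S_n` of Theorem 3 (Gill–Grünwald), defined inductively: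
`S_1 = (1)`; for odd `m`, `S_{m+1}` has `1` in the top-left corner, zero row vector to
its right, zero column vector below it, and `S_m` in the bottom-right block; for even `m`,
`S_{m+1}` has `0` in the top-left corner, all-ones row and column borders, and `S_m` in the
bottom-right block. -/
def Smat : (n : ℕ) → Matrix (Fin n) (Fin n) ℝ
  | 0 => 0
  | 1 => Matrix.of fun _ _ => 1
  | (m + 2) =>
    Matrix.of
      (Fin.cases
        (Fin.cases (if Odd (m + 1) then (1 : ℝ) else 0)
          (fun _ => if Odd (m + 1) then (0 : ℝ) else 1))
        (fun i => Fin.cases (if Odd (m + 1) then (0 : ℝ) else 1)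
          (fun j => Smat (m + 1) i j)))

/-- The vector `z = (F_{n-1}/F_n, F_{n-2}/F_n, …, F_1/F_n, 1/F_n)`,
where `F` is the Fibonacci sequence (`Nat.fib`, with `F_1 = F_2 = 1`). -/
noncomputable def zsol (n : ℕ) : Fin n → ℝ := fun i =>
  if (i : ℕ) = n - 1 then 1 / (Nat.fib n : ℝ)
  else (Nat.fib (n - 1 - (i : ℕ)) : ℝ) / (Nat.fib n : ℝ)

open Matrix

def fibVec (n : ℕ) : Fin n → ℕ := fun i =>
  if (i : ℕ) = n - 1 then 1 else Nat.fib (n - 1 - i)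

theorem fibVec_pos {n : ℕ} (i : Fin n) : 0 < fibVec n i := by
  unfold fibVec
  split_ifs with h
  · exact one_pos
  · exact Nat.fib_pos.2 (by omega)

theorem fibVec_add_two {n : ℕ} (hn : n ≠ 0) :
    fibVec (n + 2) = Fin.cons (Nat.fib (n + 1)) (Fin.cons (Nat.fib n) (fibVec n)) := by
  ext i
  refine Fin.cases ?_ (Fin.cases ?_ fun j => ?_) i
  · simp [fibVec]
  · simp [fibVec, hn]
  · simp only [fibVec, Fin.cons_succ, Fin.val_succ,
      show (j : ℕ) + 1 + 1 = n + 2 - 1 ↔ (j : ℕ) = n - 1 by omega,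
      show n + 2 - 1 - ((j : ℕ) + 1 + 1) = n - 1 - j by omega]

theorem sum_fibVec : ∀ {n : ℕ}, n ≠ 0 → ∑ i, fibVec n i = Nat.fib (n + 1)
  | 0, h => absurd rfl h
  | 1, _ => rfl
  | 2, _ => rfl
  | n + 3, _ => by
    rw [fibVec_add_two (by omega), Fin.sum_cons, Fin.sum_cons, sum_fibVec (n := n + 1) (by omega)]
    simp only [Nat.fib_add_two]

@[elab_as_elim]
theorem odd_induction {motive : (n : ℕ) → Odd n → Prop} (one : motive 1 odd_one)
    (add_two : ∀ n (hn : Odd n), motive n hn → motive (n + 2) (hn.add_even even_two))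
    {n : ℕ} (hn : Odd n) : motive n hn := by
  obtain ⟨t, rfl⟩ := hn
  induction t with
  | zero => exact one
  | succ t ih => exact add_two _ ⟨t, rfl⟩ ih

theorem zsol_eq_smul_fibVec (n : ℕ) : zsol n = (Nat.fib n : ℝ)⁻¹ • ((↑) ∘ fibVec n) := by
  ext i
  simp only [zsol, fibVec, Pi.smul_apply, Function.comp_apply, smul_eq_mul]
  split_ifs <;> simp [div_eq_inv_mul]

theorem smat_add_one_mulVec_cons_of_odd {n : ℕ} (hn : Odd n) (a : ℝ) (w : Fin n → ℝ) :
    Smat (n + 1) *ᵥ Fin.cons a w = Fin.cons a (Smat n *ᵥ w) := by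
  obtain ⟨m, rfl⟩ : ∃ m, n = m + 1 := Nat.exists_eq_add_one.2 hn.pos
  ext i
  refine Fin.cases ?_ (fun j => ?_) i <;>
    simp [Matrix.mulVec, dotProduct, Fin.sum_univ_succ, Smat, hn]

theorem smat_add_one_mulVec_cons_of_even {n : ℕ} (hn : Even n) (hn0 : n ≠ 0) (a : ℝ)
    (w : Fin n → ℝ) :
    Smat (n + 1) *ᵥ Fin.cons a w = Fin.cons (∑ i, w i) (fun i => a + (Smat n *ᵥ w) i) := by
  obtain ⟨m, rfl⟩ : ∃ m, n = m + 1 := Nat.exists_eq_add_one.2 (Nat.pos_of_ne_zero hn0)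
  have : ¬ Odd (m + 1) := Nat.not_odd_iff_even.2 hn
  ext i
  refine Fin.cases ?_ (fun j => ?_) i <;>
    simp [Matrix.mulVec, dotProduct, Fin.sum_univ_succ, Smat, this]

theorem smat_add_two_mulVec_cons_cons {n : ℕ} (hn : Odd n) (a b : ℝ) (w : Fin n → ℝ) :
    Smat (n + 2) *ᵥ Fin.cons a (Fin.cons b w) =
      Fin.cons (b + ∑ i, w i) (Fin.cons (a + b) fun i => a + (Smat n *ᵥ w) i) := by
  rw [smat_add_one_mulVec_cons_of_even (by simpa [Nat.even_add_one] using hn) (by omega),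
    Fin.sum_cons, smat_add_one_mulVec_cons_of_odd hn]
  exact congrArg _ (Fin.comp_cons (a + ·) b _)

theorem smat_mulVec_fibVec {n : ℕ} (hn : Odd n) :
    Smat n *ᵥ ((↑) ∘ fibVec n) = (Nat.fib n : ℝ) • 1 := by
  induction hn using odd_induction with
  | one => ext i; fin_cases i; simp [Smat, fibVec, mulVec, dotProduct]
  | add_two n hn ih =>
    have hsum : ∑ i, ((↑) ∘ fibVec n) i = (Nat.fib (n + 1) : ℝ) := by
      simp [← Nat.cast_sum, sum_fibVec hn.pos.ne']
    have hfib : (Nat.fib (n + 2) : ℝ) = Nat.fib (n + 1) + Nat.fib n := by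
      rw [Nat.fib_add_two]; push_cast; ring
    rw [fibVec_add_two hn.pos.ne', Fin.comp_cons, Fin.comp_cons,
      smat_add_two_mulVec_cons_cons hn, ih, hsum]
    ext i
    refine Fin.cases ?_ (Fin.cases ?_ fun j => ?_) i
    · simp [hfib]
      ring
    · simp [hfib]
    · simp [hfib]

theorem smat_mulVec_zsol {n : ℕ} (hn : Odd n) : Smat n *ᵥ zsol n = 1 := by
  have hF : (Nat.fib n : ℝ) ≠ 0 := by exact_mod_cast (Nat.fib_pos.2 hn.pos).ne'
  rw [zsol_eq_smul_fibVec, mulVec_smul, smat_mulVec_fibVec hn, inv_smul_smul₀ hF]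

theorem fib_mul_zsol {n : ℕ} (i : Fin n) : (Nat.fib n : ℝ) * zsol n i = fibVec n i := by
  have hF : (Nat.fib n : ℝ) ≠ 0 := by exact_mod_cast (Nat.fib_pos.2 i.pos).ne'
  rw [zsol_eq_smul_fibVec, Pi.smul_apply, smul_eq_mul, mul_inv_cancel_left₀ hF]
  rfl

theorem zsol_pos {n : ℕ} (i : Fin n) : 0 < zsol n i := by
  have hF : (0 : ℝ) < Nat.fib n := by exact_mod_cast Nat.fib_pos.2 i.pos
  have hu : (0 : ℝ) < fibVec n i := by exact_mod_cast fibVec_pos i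
  exact pos_of_mul_pos_right (fib_mul_zsol i ▸ hu) hF.le

theorem smat_mulVec_injective {n : ℕ} (hn : Odd n) : Function.Injective (Smat n).mulVec := by
  induction hn using odd_induction with
  | one =>
    intro v w h
    ext i
    fin_cases i
    simpa [Smat, mulVec, dotProduct] using congrFun h 0
  | add_two n hn ih =>
    refine (injective_iff_map_eq_zero (Smat (n + 2)).mulVecLin).2 fun v hv => ?_
    induction v using Fin.consCases with | cons a v =>
    induction v using Fin.consCases with | cons b w =>
    rw [mulVecLin_apply, smat_add_two_mulVec_cons_cons hn] at hv
    obtain ⟨hrow₀, hv⟩ := cons_eq_zero_iff.1 hv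
    obtain ⟨hrow₁, hrows⟩ := cons_eq_zero_iff.1 hv
    have hw : w = b • zsol n := by
      refine ih ?_
      rw [mulVec_smul, smat_mulVec_zsol hn]
      ext i
      have := congrFun hrows i
      simp only [Pi.zero_apply] at this
      simp only [Pi.smul_apply, Pi.one_apply, smul_eq_mul]
      linarith
    have hsum : 0 < ∑ i, zsol n i :=
      Finset.sum_pos (fun i _ => zsol_pos i) ⟨⟨0, hn.pos⟩, Finset.mem_univ _⟩
    have hb : b = 0 := by
      rw [hw] at hrow₀
      simp only [Pi.smul_apply, smul_eq_mul, ← Finset.mul_sum] at hrow₀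
      have hfactor : b * (1 + ∑ i, zsol n i) = 0 := by linarith
      exact (mul_eq_zero.1 hfactor).resolve_right (by linarith)
    have ha : a = 0 := by linarith
    rw [hw, ha, hb, zero_smul]
    exact cons_eq_zero_iff.2 ⟨rfl, cons_eq_zero_iff.2 ⟨rfl, rfl⟩⟩

theorem smat_solution_positive_general (n : ℕ) (hn : Odd n) :
    (∃! z : Fin n → ℝ, (Smat n).mulVec z = 1) ∧
    (Smat n).mulVec (zsol n) = 1 ∧
    (∀ i : Fin n, 0 < zsol n i) ∧
    (∀ i : Fin n, ∃ m : ℕ, 0 < m ∧ (Nat.fib n : ℝ) * zsol n i = (m : ℝ)) := by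
  have hsol := smat_mulVec_zsol hn
  exact ⟨⟨zsol n, hsol, fun z hz => smat_mulVec_injective hn (hz.trans hsol.symm)⟩, hsol,
    zsol_pos, fun i => ⟨fibVec n i, fibVec_pos i, fib_mul_zsol i⟩⟩

/-- For every odd `n > 0`, the system `S_n z = 1` has a unique solution, namely
`z = (F_{n-1}/F_n, …, F_1/F_n, 1/F_n)`; each entry of this solution is strictly
positive, and consequently `F_n · z_i` is a positive integer for each `i`. -/
theorem smat_solution_positive (n : ℕ) (hn : Odd n) (hpos : 0 < n) :
    (∃! z : Fin n → ℝ, (Smat n).mulVec z = 1) ∧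
    (Smat n).mulVec (zsol n) = 1 ∧
    (∀ i : Fin n, 0 < zsol n i) ∧
    (∀ i : Fin n, ∃ m : ℕ, 0 < m ∧ (Nat.fib n : ℝ) * zsol n i = (m : ℝ)) :=
  smat_solution_positive_general n hn
end

section
/- The support of an extreme CAR mechanism on a finite set E of n elements contains at most n sets: if π is a CAR mechanism on E that is the unique CAR mechanism with its support, then the number of nonempty subsets A of E with π(A) > 0 is at most |E|. -/
/-- The support of an extreme CAR mechanism on a finite set `E` has at most `|E|`
elements: if a CAR mechanism `π` is the unique CAR mechanism with its support, then
the number of sets `A` with `π A > 0` is at most `|E|`. -/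
theorem extreme_car_support_card_le {E : Type*} [Fintype E] [DecidableEq E] [Nonempty E]
    (π : Finset E → ℝ) (hπ : IsCAR π)
    (hext : ∀ π' : Finset E → ℝ, IsCAR π' → carSupport π' = carSupport π → π' = π) :
    (carSupport π).ncard ≤ Fintype.card E := by
  classical
  by_contra hcard
  push_neg at hcard
  set S : Finset (Finset E) := Finset.univ.filter (fun A => 0 < π A) with hSdef
  have hmemS : ∀ A : Finset E, A ∈ S ↔ 0 < π A := by
    intro A; simp [hSdef]
  have hsupp : carSupport π = ↑S := by
    ext A; simp [carSupport, hmemS A]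
  have hScard : Fintype.card E < S.card := by
    rwa [hsupp, Set.ncard_coe_finset] at hcard
  -- the linear constraint map
  let T : ({A // A ∈ S} → ℝ) →ₗ[ℝ] (E → ℝ) :=
    { toFun := fun a x => ∑ A : {A // A ∈ S}, (if x ∈ (A : Finset E) then (1:ℝ) else 0) * a A
      map_add' := by
        intro a b; funext x
        simp [mul_add, Finset.sum_add_distrib]
      map_smul' := by
        intro c a; funext x
        simp only [Finset.mul_sum, RingHom.id_apply, Pi.smul_apply, smul_eq_mul]
        exact Finset.sum_congr rfl fun A _ => by ring }
  have hnotinj : ¬ Function.Injective T := by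
    intro hinj
    have h1 := LinearMap.finrank_le_finrank_of_injective hinj
    rw [Module.finrank_fintype_fun_eq_card, Module.finrank_fintype_fun_eq_card,
      Fintype.card_coe] at h1
    omega
  obtain ⟨a, b, hab, hne⟩ := Function.not_injective_iff.mp hnotinj
  set v : {A // A ∈ S} → ℝ := a - b with hvdef
  have hv0 : T v = 0 := by rw [hvdef, map_sub, hab, sub_self]
  have hvne : v ≠ 0 := sub_ne_zero.mpr hne
  -- extend v by zero
  set w : Finset E → ℝ := fun A => if h : A ∈ S then v ⟨A, h⟩ else 0 with hwdef
  have hw0 : ∀ A ∉ S, w A = 0 := by intro A hA; simp [hwdef, hA]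
  have hwv : ∀ A : {A // A ∈ S}, w A = v A := by intro A; simp [hwdef]
  have hkey : ∀ x : E, ∑ A ∈ Finset.univ.filter (fun A : Finset E => x ∈ A), w A = 0 := by
    intro x
    have h2 : ∑ A ∈ Finset.univ.filter (fun A : Finset E => x ∈ A), w A
        = ∑ A ∈ Finset.univ, if x ∈ A then w A else 0 := Finset.sum_filter _ _
    have h3 : ∑ A ∈ Finset.univ, (if x ∈ A then w A else 0)
        = ∑ A ∈ S, (if x ∈ A then w A else 0) := by
      refine (Finset.sum_subset (Finset.subset_univ S) ?_).symm
      intro A _ hA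
      simp [hw0 A hA]
    have h4 : ∑ A ∈ S, (if x ∈ A then w A else 0)
        = ∑ A : {A // A ∈ S}, (if x ∈ (A : Finset E) then (1:ℝ) else 0) * v A := by
      rw [← Finset.sum_attach S (fun A => if x ∈ A then w A else 0)]
      refine Finset.sum_congr rfl fun A _ => ?_
      rw [hwv A]
      split <;> simp
    rw [h2, h3, h4]
    exact congrFun hv0 x
  -- choose a small ε
  have hSne : S.Nonempty := by
    rw [← Finset.card_pos]
    have := Fintype.card_pos (α := E)
    omega
  set ε : ℝ := S.inf' hSne (fun A => π A / (|w A| + 1)) with hεdef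
  have hεpos : 0 < ε := by
    rw [hεdef, Finset.lt_inf'_iff]
    intro A hA
    exact div_pos ((hmemS A).mp hA) (by positivity)
  have hεsmall : ∀ A ∈ S, ε * |w A| < π A := by
    intro A hA
    have h5 : ε ≤ π A / (|w A| + 1) := Finset.inf'_le _ hA
    have h6 : ε * (|w A| + 1) ≤ π A := by
      rw [← le_div_iff₀ (by positivity)]; exact h5
    nlinarith [abs_nonneg (w A)]
  set π' : Finset E → ℝ := fun A => π A + ε * w A with hπ'def
  have hpos' : ∀ A ∈ S, 0 < π' A := by
    intro A hA
    have h7 : -(ε * |w A|) ≤ ε * w A := by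
      have := mul_le_mul_of_nonneg_left (neg_abs_le (w A)) hεpos.le
      linarith
    have := hεsmall A hA
    simp only [hπ'def]
    linarith
  have heq' : ∀ A ∉ S, π' A = π A := by
    intro A hA; simp [hπ'def, hw0 A hA]
  have hsupp' : carSupport π' = carSupport π := by
    rw [hsupp]
    ext A
    by_cases hA : A ∈ S
    · simp only [carSupport, Set.mem_setOf_eq, Finset.coe_sort_coe]
      constructor
      · intro _; exact_mod_cast hA
      · intro _; exact hpos' A hA
    · simp only [carSupport, Set.mem_setOf_eq, heq' A hA]
      constructor
      · intro h; exact absurd ((hmemS A).mpr h) hA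
      · intro h; exact absurd (by exact_mod_cast h : A ∈ S) hA
  have hCAR' : IsCAR π' := by
    refine ⟨?_, ?_, ?_⟩
    · have hnot : ∅ ∉ S := by
        rw [hmemS]; rw [hπ.1]; exact lt_irrefl 0
      rw [heq' ∅ hnot]; exact hπ.1
    · intro A
      by_cases hA : A ∈ S
      · exact (hpos' A hA).le
      · rw [heq' A hA]; exact hπ.2.1 A
    · intro x
      simp only [hπ'def]
      rw [Finset.sum_add_distrib, hπ.2.2 x, ← Finset.mul_sum, hkey x]
      ring
  have hfinal := hext π' hCAR' hsupp'
  obtain ⟨A, hA⟩ := Function.ne_iff.mp hvne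
  have : π' ↑A = π ↑A := congrFun hfinal ↑A
  have : ε * w ↑A = 0 := by simp only [hπ'def] at this; linarith
  rw [hwv A] at this
  rcases mul_eq_zero.mp this with h | h
  · exact absurd h hεpos.ne'
  · exact hA (by simpa using h)
end

section
/- A factorial upper bound on the height of extreme CAR mechanisms: if π is an extreme CAR mechanism on a finite set E whose support has m elements, then there exists a positive integer k with k ≤ m! such that k·π(A) is an integer for every nonempty subset A of E. In particular, if |E| = n, one may take k ≤ n!. -/
/-!
Let `S` be the support of `π` and `M` the `E × S` incidence matrix. A vector `d` with `M d = 0`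
gives perturbations `π + ε d` that are still CAR with the same support for all small `ε`, so
extremality forces `M` to be injective. Then some `|S|` rows of `M` form an invertible `0/1`
matrix `Q` with `Q π = 1`, so by Cramer's rule `det Q • π` is integral, while
`|det Q| ≤ |S|! ≤ |E|!` by the permutation expansion and `|S| ≤ |E|`.
-/

open Filter Topology Finset Matrix

namespace Matrix

variable {m n : Type*} [Fintype n] [DecidableEq n]

lemma exists_injective_det_submatrix_ne_zero {K : Type*} [Field K] [Finite m]
    (M : Matrix m n K) (hM : Function.Injective M.mulVec) :
    ∃ r : n → m, Function.Injective r ∧ (M.submatrix r id).det ≠ 0 := by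
  obtain ⟨κ, a, ha, hspan, hli⟩ := exists_linearIndependent' K M.row
  have : Finite κ := Finite.of_injective a ha
  have : Fintype κ := Fintype.ofFinite κ
  have hcard : Fintype.card n = Fintype.card κ := by
    rw [← finrank_span_eq_card hli, hspan, ← rank_eq_finrank_span_row, rank,
      LinearMap.finrank_range_of_inj hM, Module.finrank_fintype_fun_eq_card]
  let e : n ≃ κ := Fintype.equivOfCardEq hcard
  refine ⟨a ∘ e, ha.comp e.injective, ?_⟩
  have hrows : LinearIndependent K (M.submatrix (a ∘ e) id).row := hli.comp e e.injective
  exact ((isUnit_iff_isUnit_det _).mp (linearIndependent_rows_iff_isUnit.mp hrows)).ne_zero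

lemma intCast_det_mul_eq_of_map_mulVec_eq {R : Type*} [CommRing R] (Q : Matrix n n ℤ)
    {x : n → R} {b : n → ℤ} (h : Q.map (Int.castRingHom R) *ᵥ x = fun i => (b i : R))
    (i : n) : (Q.det : R) * x i = ((Q.adjugate *ᵥ b) i : R) := by
  have hdet : (Q.det : R) • x = (Q.map (Int.castRingHom R)).adjugate *ᵥ fun i => (b i : R) := by
    rw [← h, mulVec_mulVec, adjugate_mul, smul_mulVec, one_mulVec, ← RingHom.mapMatrix_apply,
      ← RingHom.map_det, eq_intCast]
  rw [← smul_eq_mul, ← Pi.smul_apply, hdet, ← RingHom.mapMatrix_apply, ← RingHom.map_adjugate,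
    RingHom.mapMatrix_apply, ← eq_intCast (Int.castRingHom R), RingHom.map_mulVec]
  rfl

lemma natAbs_det_le_factorial (Q : Matrix n n ℤ) (hQ : ∀ i j, |Q i j| ≤ 1) :
    Q.det.natAbs ≤ (Fintype.card n).factorial := by
  have := det_le (abv := AbsoluteValue.abs) hQ
  simp only [AbsoluteValue.abs_apply, one_pow, nsmul_eq_mul, mul_one, Int.abs_eq_natAbs] at this
  exact_mod_cast this

end Matrix

section CAR

variable {E : Type*}

noncomputable def carSupportFinset [Fintype E] (π : Finset E → ℝ) : Finset (Finset E) :=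
  univ.filter fun A => 0 < π A

lemma coe_carSupportFinset [Fintype E] (π : Finset E → ℝ) :
    ↑(carSupportFinset π) = carSupport π := by
  ext A; simp [carSupportFinset, carSupport]

section Incidence

variable [DecidableEq E]

def incidence (R : Type*) [Zero R] [One R] (S : Finset (Finset E)) : Matrix E S R :=
  of fun x A => if x ∈ (A : Finset E) then 1 else 0

lemma incidence_map_intCast (R : Type*) [Ring R] (S : Finset (Finset E)) :
    (incidence ℤ S).map (Int.castRingHom R) = incidence R S := by
  ext x A; simp only [incidence, map_apply, of_apply]; split_ifs <;> simp

lemma abs_incidence_le_one (S : Finset (Finset E)) (x : E) (A : S) :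
    |incidence ℤ S x A| ≤ 1 := by
  simp only [incidence, of_apply]; split_ifs <;> simp

lemma incidence_mulVec_apply [Fintype E] {S : Finset (Finset E)} {f : Finset E → ℝ}
    (hf : ∀ A ∉ S, f A = 0) (x : E) :
    (incidence ℝ S *ᵥ fun A : S => f A) x = ∑ A ∈ univ.filter (x ∈ ·), f A := by
  simp only [mulVec, dotProduct, incidence, of_apply, ite_mul, one_mul, zero_mul]
  rw [sum_coe_sort S (fun A => if x ∈ A then f A else 0), sum_filter]
  exact sum_subset (subset_univ S) fun A _ hA => by simp [hf A hA]

end Incidence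

namespace IsCAR

variable [Fintype E] [DecidableEq E] {π D : Finset E → ℝ}

lemma eventually_add_smul (hπ : IsCAR π) (hD : ∀ A, π A = 0 → D A = 0)
    (hDsum : ∀ x, ∑ A ∈ univ.filter (x ∈ ·), D A = 0) :
    ∀ᶠ ε in 𝓝 (0 : ℝ), IsCAR (π + ε • D) ∧ carSupport (π + ε • D) = carSupport π := by
  obtain ⟨hπ0, hπnn, hπsum⟩ := hπ
  have hpos : ∀ᶠ ε in 𝓝 (0 : ℝ), ∀ A, 0 < π A → 0 < π A + ε * D A := by
    refine eventually_all.2 fun A => ?_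
    by_cases hA : 0 < π A
    · have hcont : Tendsto (fun ε => π A + ε * D A) (𝓝 0) (𝓝 (π A)) :=
        (by fun_prop : Continuous fun ε : ℝ => π A + ε * D A).tendsto' 0 _ (by simp)
      exact (hcont.eventually (lt_mem_nhds hA)).mono fun _ h _ => h
    · exact .of_forall fun _ h => absurd h hA
  filter_upwards [hpos] with ε hε
  have hzero : ∀ A, ¬ 0 < π A → (π + ε • D) A = 0 := fun A hA => by
    have : π A = 0 := le_antisymm (not_lt.1 hA) (hπnn A)
    simp [this, hD A this]
  have hsupp : ∀ A, 0 < (π + ε • D) A ↔ 0 < π A := fun A => by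
    by_cases hA : 0 < π A
    · simpa [hA] using hε A hA
    · simp [hA, hzero A hA]
  refine ⟨⟨hzero ∅ (by simp [hπ0]), fun A => ?_, fun x => ?_⟩, Set.ext hsupp⟩
  · by_cases hA : 0 < π A
    · exact ((hsupp A).2 hA).le
    · exact (hzero A hA).ge
  · simp [sum_add_distrib, ← mul_sum, hπsum x, hDsum x]

lemma eq_zero_of_sum_eq_zero (hπ : IsCAR π)
    (hext : ∀ π' : Finset E → ℝ, IsCAR π' → carSupport π' = carSupport π → π' = π)
    (hD : ∀ A, π A = 0 → D A = 0) (hDsum : ∀ x, ∑ A ∈ univ.filter (x ∈ ·), D A = 0) :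
    D = 0 := by
  obtain ⟨ε, ⟨hcar, hsupp⟩, hε⟩ := ((hπ.eventually_add_smul hD hDsum).filter_mono
    nhdsWithin_le_nhds |>.and (self_mem_nhdsWithin (s := {0}ᶜ))).exists
  have : ε • D = 0 := by simpa using hext _ hcar hsupp
  exact (smul_eq_zero.1 this).resolve_left hε

lemma eq_zero_of_notMem_carSupportFinset (hπ : IsCAR π) {A : Finset E}
    (hA : A ∉ carSupportFinset π) : π A = 0 :=
  le_antisymm (by simpa [carSupportFinset] using hA) (hπ.2.1 A)

lemma incidence_mulVec_eq_one (hπ : IsCAR π) :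
    incidence ℝ (carSupportFinset π) *ᵥ (fun A => π A) = 1 := by
  ext x
  rw [incidence_mulVec_apply fun _ => hπ.eq_zero_of_notMem_carSupportFinset, hπ.2.2 x,
    Pi.one_apply]

lemma injective_incidence_mulVec (hπ : IsCAR π)
    (hext : ∀ π' : Finset E → ℝ, IsCAR π' → carSupport π' = carSupport π → π' = π) :
    Function.Injective (incidence ℝ (carSupportFinset π)).mulVec := by
  set S := carSupportFinset π
  refine (injective_iff_map_eq_zero (incidence ℝ S).mulVecLin).2 fun d hd => ?_
  set D : Finset E → ℝ := Function.extend Subtype.val d 0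
  have hDS : (fun A : S => D A) = d := funext (Subtype.val_injective.extend_apply d 0)
  have hDoff : ∀ A ∉ S, D A = 0 := fun A hA =>
    Function.extend_apply' _ _ _ fun ⟨B, hB⟩ => hA (hB ▸ B.2)
  have hD0 : D = 0 := hπ.eq_zero_of_sum_eq_zero hext
    (fun A hA => hDoff A (by simp [S, carSupportFinset, hA]))
    (fun x => by rw [← incidence_mulVec_apply hDoff, hDS]; exact congrFun hd x)
  rw [← hDS, hD0]
  rfl

end IsCAR

end CAR

lemma exists_intCast_eq_natAbs_mul {d z : ℤ} {y : ℝ} (h : (d : ℝ) * y = z) :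
    ∃ w : ℤ, (d.natAbs : ℝ) * y = w :=
  ⟨d.sign * z, by
    rw [← Int.cast_natCast, ← Int.sign_mul_self_eq_natAbs, Int.cast_mul, mul_assoc, h, Int.cast_mul]⟩

theorem extreme_car_height_le_factorial_general {E : Type*} [Fintype E] [DecidableEq E]
    (π : Finset E → ℝ) (hπ : IsCAR π)
    (hext : ∀ π' : Finset E → ℝ, IsCAR π' → carSupport π' = carSupport π → π' = π)
    (m : ℕ) (hm : (carSupport π).ncard = m) :
    ∃ k : ℕ, 0 < k ∧ k ≤ Nat.factorial m ∧ k ≤ Nat.factorial (Fintype.card E) ∧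
      ∀ A : Finset E, ∃ z : ℤ, (k : ℝ) * π A = (z : ℝ) := by
  set S := carSupportFinset π
  have hSm : Fintype.card S = m := by
    rw [← hm, ← coe_carSupportFinset, Set.ncard_coe_finset, Fintype.card_coe]
  obtain ⟨r, hr, hdet⟩ := (incidence ℝ S).exists_injective_det_submatrix_ne_zero
    (hπ.injective_incidence_mulVec hext)
  set Q := (incidence ℤ S).submatrix r id
  have hQ : Q.map (Int.castRingHom ℝ) = (incidence ℝ S).submatrix r id := by
    rw [← submatrix_map, incidence_map_intCast]
  have hQdet : Q.det ≠ 0 := fun h0 => hdet <| by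
    rw [← hQ, ← RingHom.mapMatrix_apply, ← RingHom.map_det, h0, map_zero]
  have hk : Q.det.natAbs ≤ m.factorial :=
    hSm ▸ Q.natAbs_det_le_factorial fun i A => abs_incidence_le_one S (r i) A
  have hmE : m ≤ Fintype.card E := hSm ▸ Fintype.card_le_of_injective r hr
  refine ⟨Q.det.natAbs, Int.natAbs_pos.2 hQdet, hk, hk.trans (Nat.factorial_le hmE), fun A => ?_⟩
  by_cases hA : A ∈ S
  · have hsol : Q.map (Int.castRingHom ℝ) *ᵥ (fun B : S => π B) = fun _ => ((1 : ℤ) : ℝ) := by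
      rw [hQ]; ext i; exact congrFun hπ.incidence_mulVec_eq_one (r i) |>.trans (by simp)
    exact exists_intCast_eq_natAbs_mul (Q.intCast_det_mul_eq_of_map_mulVec_eq hsol ⟨A, hA⟩)
  · exact ⟨0, by simp [hπ.eq_zero_of_notMem_carSupportFinset hA]⟩

/-- A factorial upper bound on the height of extreme CAR mechanisms: if `π` is an
extreme CAR mechanism (the unique CAR mechanism with its support) whose support has
`m` elements, then some positive integer `k ≤ m!` makes every `k · π A` an integer;
in particular, since `m ≤ |E| = n`, one may take `k ≤ n!`. -/
theorem extreme_car_height_le_factorial {E : Type*} [Fintype E] [DecidableEq E] [Nonempty E]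
    (π : Finset E → ℝ) (hπ : IsCAR π)
    (hext : ∀ π' : Finset E → ℝ, IsCAR π' → carSupport π' = carSupport π → π' = π)
    (m : ℕ) (hm : (carSupport π).ncard = m) :
    ∃ k : ℕ, 0 < k ∧ k ≤ Nat.factorial m ∧ k ≤ Nat.factorial (Fintype.card E) ∧
      ∀ A : Finset E, ∃ z : ℤ, (k : ℝ) * π A = (z : ℝ) :=
  extreme_car_height_le_factorial_general π hπ hext m hm
end

section
/- Exponential lower bound on the maximal height of extreme CAR mechanisms: for every odd n > 0 there exists an extreme CAR mechanism π on a set E with |E| = n such that the smallest positive integer k with k·π(A) an integer for every nonempty A ⊆ E equals the Fibonacci number F_n. -/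
/-- An extreme CAR mechanism: a CAR mechanism that is the unique CAR mechanism
with its support. -/
def IsExtremeCAR {E : Type*} [Fintype E] [DecidableEq E] (π : Finset E → ℝ) : Prop :=
  IsCAR π ∧
    ∀ π' : Finset E → ℝ, IsCAR π' → carSupport π' = carSupport π → π' = π


open Finset

section FamilyMechanism

variable {ι E : Type*} [Fintype ι] [DecidableEq E] {S : ι → Finset E} {w : ι → ℝ}

noncomputable def familyMechanism (S : ι → Finset E) (w : ι → ℝ) (A : Finset E) : ℝ :=
  ∑ i with S i = A, w i

theorem familyMechanism_apply_of_injective (hS : Function.Injective S) (i : ι) :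
    familyMechanism S w (S i) = w i := by
  rw [familyMechanism, sum_eq_single_of_mem i (by simp)]
  intro j hj hji
  exact absurd (hS (mem_filter.1 hj).2) hji

theorem familyMechanism_eq_zero {A : Finset E} (hA : A ∉ Set.range S) :
    familyMechanism S w A = 0 :=
  sum_eq_zero fun i hi => absurd ⟨i, (mem_filter.1 hi).2⟩ hA

theorem eq_familyMechanism_comp (hS : Function.Injective S) {π : Finset E → ℝ}
    (hπ : ∀ A ∉ Set.range S, π A = 0) : π = familyMechanism S (π ∘ S) := by
  ext A
  by_cases hA : A ∈ Set.range S
  · obtain ⟨i, rfl⟩ := hA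
    exact (familyMechanism_apply_of_injective (w := π ∘ S) hS i).symm
  · rw [hπ A hA, familyMechanism_eq_zero hA]

theorem carSupport_familyMechanism (hw : ∀ i, 0 < w i) :
    carSupport (familyMechanism S w) = Set.range S := by
  ext A
  refine ⟨fun hA => ?_, ?_⟩
  · by_contra h
    exact hA.ne' (familyMechanism_eq_zero h)
  · rintro ⟨i, rfl⟩
    exact sum_pos (fun j _ => hw j) ⟨i, by simp⟩

theorem linearIndependent_indicator_iff :
    LinearIndependent ℝ (fun i x => if x ∈ S i then (1 : ℝ) else 0) ↔
      ∀ c : ι → ℝ, (∀ x, ∑ i with x ∈ S i, c i = 0) → c = 0 := by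
  have key : ∀ c : ι → ℝ, (∑ i, c i • fun x => if x ∈ S i then (1 : ℝ) else 0) =
      fun x => ∑ i with x ∈ S i, c i := by
    intro c
    ext x
    simp [Finset.sum_apply, sum_filter]
  simp only [Fintype.linearIndependent_iff, key, funext_iff, Pi.zero_apply]

variable [Fintype E]

theorem sum_familyMechanism (x : E) :
    ∑ A with x ∈ A, familyMechanism S w A = ∑ i with x ∈ S i, w i := by
  rw [← sum_fiberwise_of_maps_to (t := univ.filter (x ∈ ·)) (g := S) (by simp)]
  refine sum_congr rfl fun A hA => ?_
  rw [filter_filter]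
  refine sum_congr (filter_congr fun i _ => ?_) fun _ _ => rfl
  exact ⟨fun h => ⟨h ▸ (mem_filter.1 hA).2, h⟩, And.right⟩

theorem isExtremeCAR_familyMechanism
    (hS : LinearIndependent ℝ (fun i x => if x ∈ S i then (1 : ℝ) else 0))
    (hw : ∀ i, 0 < w i) (hsum : ∀ x, ∑ i with x ∈ S i, w i = 1) :
    IsExtremeCAR (familyMechanism S w) := by
  have hinj : Function.Injective S := fun i j hij => hS.injective (by simp only [hij])
  refine ⟨⟨familyMechanism_eq_zero ?_, fun A => ?_, fun x => ?_⟩, fun π hπ hsupp => ?_⟩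
  · rintro ⟨i, hi⟩
    exact hS.ne_zero i (by ext x; simp [hi])
  · exact sum_nonneg fun i _ => (hw i).le
  · rw [sum_familyMechanism, hsum]
  · have hπS : ∀ A ∉ Set.range S, π A = 0 := fun A hA =>
      (hπ.2.1 A).antisymm' <| not_lt.1 fun h => hA <| by
        rw [← carSupport_familyMechanism hw, ← hsupp]; exact h
    have hsumπ : ∀ x, ∑ i with x ∈ S i, π (S i) = 1 := fun x => by
      have := sum_familyMechanism (S := S) (w := π ∘ S) x
      rw [← eq_familyMechanism_comp hinj hπS, hπ.2.2 x] at this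
      exact this.symm
    have hc := linearIndependent_indicator_iff.1 hS (π ∘ S - w) fun x => by
      simp only [Pi.sub_apply, Function.comp_apply, sum_sub_distrib, hsumπ, hsum, sub_self]
    rw [eq_familyMechanism_comp hinj hπS, sub_eq_zero.1 hc]

end FamilyMechanism

theorem isLeast_pos_int_multiplier {α : Type*} (π : α → ℝ) {N : ℕ} (hN : 0 < N)
    (hint : ∀ A, ∃ z : ℤ, (N : ℝ) * π A = z) {A₀ : α}
    (hA₀ : π A₀ = (N : ℝ)⁻¹) :
    IsLeast {k : ℕ | 0 < k ∧ ∀ A, ∃ z : ℤ, (k : ℝ) * π A = z} N := by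
  refine ⟨⟨hN, hint⟩, fun k ⟨hk, hkint⟩ => ?_⟩
  obtain ⟨z, hz⟩ := hkint A₀
  have hkz : (k : ℤ) = z * N := by
    rw [hA₀, ← div_eq_mul_inv, div_eq_iff (by positivity)] at hz
    exact_mod_cast hz
  exact Nat.le_of_dvd hk (Int.natCast_dvd_natCast.1 ⟨z, by rw [hkz, mul_comm]⟩)

theorem Finset.sum_filter_range_add_two {M : Type*} [AddCommMonoid M] (p : ℕ → Prop)
    [DecidablePred p] (f : ℕ → M) (n : ℕ) :
    ∑ j ∈ range (n + 2) with p j, f j =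
      ∑ j ∈ range n with p j, f j + (if p n then f n else 0) +
        if p (n + 1) then f (n + 1) else 0 := by
  simp only [sum_filter, sum_range_succ]

open Nat

/-- `InFibSet x j` says `x ∈ S_j`, where `S_0` is the set of even numbers,
`S_j = {j} ∪ {even x > j}` for odd `j` and `S_j = [0, j) ∪ {even x > j}` for even `j > 0`;
the support sets of the mechanism on `2m + 1` points are the `S_j ∩ [0, 2m]` with `j ≤ 2m`. -/
def InFibSet (x j : ℕ) : Prop :=
  (x % 2 = 0 ∧ j < x) ∨ (j % 2 = 1 ∧ x = j) ∨ (j % 2 = 0 ∧ (x < j ∨ x = 0))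

instance : DecidableRel InFibSet := fun x j => by unfold InFibSet; infer_instance

section Step

variable {M : Type*} [AddCommMonoid M] (f : ℕ → M) (m : ℕ)

theorem sum_range_add_two_inFibSet_of_lt {x : ℕ} (hx : x < 2 * m + 1) :
    ∑ j ∈ range (2 * m + 1 + 2) with InFibSet x j, f j =
      ∑ j ∈ range (2 * m + 1) with InFibSet x j, f j + f (2 * m + 2) := by
  rw [sum_filter_range_add_two, if_neg (by unfold InFibSet; omega),
    if_pos (by unfold InFibSet; omega), add_zero]

theorem sum_range_add_two_inFibSet_self :
    ∑ j ∈ range (2 * m + 1 + 2) with InFibSet (2 * m + 1) j, f j =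
      f (2 * m + 1) + f (2 * m + 2) := by
  rw [sum_filter_range_add_two, filter_false_of_mem fun j (hj : j ∈ range _) =>
      (by unfold InFibSet; simp at hj; omega : ¬InFibSet (2 * m + 1) j),
    if_pos (by unfold InFibSet; omega), if_pos (by unfold InFibSet; omega), sum_empty, zero_add]

theorem sum_range_add_two_inFibSet_succ :
    ∑ j ∈ range (2 * m + 1 + 2) with InFibSet (2 * m + 2) j, f j =
      ∑ j ∈ range (2 * m + 1), f j + f (2 * m + 1) := by
  rw [sum_filter_range_add_two, filter_true_of_mem fun j (hj : j ∈ range _) =>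
      (by unfold InFibSet; simp at hj; omega : InFibSet (2 * m + 2) j),
    if_pos (by unfold InFibSet; omega), if_neg (by unfold InFibSet; omega), add_zero]

end Step

def fibWeight : ℕ → ℕ
  | 0 => 1
  | j + 1 => fib (j + 1)

theorem fibWeight_pos (j : ℕ) : 0 < fibWeight j := by
  cases j with
  | zero => exact Nat.one_pos
  | succ j => exact fib_pos.2 j.succ_pos

theorem sum_range_fibWeight (n : ℕ) : ∑ j ∈ range (n + 1), fibWeight j = fib (n + 2) := by
  induction n with
  | zero => rfl
  | succ n ih => rw [sum_range_succ, ih, fib_add_two (n := n + 1), add_comm]; rfl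

theorem sum_fibWeight_inFibSet (m : ℕ) {x : ℕ} (hx : x < 2 * m + 1) :
    ∑ j ∈ range (2 * m + 1) with InFibSet x j, fibWeight j = fib (2 * m + 1) := by
  induction m generalizing x with
  | zero =>
    obtain rfl : x = 0 := by omega
    rfl
  | succ m ih =>
    rw [show 2 * (m + 1) + 1 = 2 * m + 1 + 2 by ring, fib_add_two]
    rcases (by omega : x < 2 * m + 1 ∨ x = 2 * m + 1 ∨ x = 2 * m + 2) with hx | rfl | rfl
    · rw [sum_range_add_two_inFibSet_of_lt _ _ hx, ih hx]
      rfl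
    · exact sum_range_add_two_inFibSet_self _ _
    · rw [sum_range_add_two_inFibSet_succ, sum_range_fibWeight, add_comm]
      rfl

theorem eq_zero_of_sum_inFibSet_eq_zero (m : ℕ) (c : ℕ → ℝ)
    (hc : ∀ x < 2 * m + 1, ∑ j ∈ range (2 * m + 1) with InFibSet x j, c j = 0) :
    ∀ j < 2 * m + 1, c j = 0 := by
  induction m generalizing c with
  | zero =>
    intro j hj
    obtain rfl : j = 0 := by omega
    have h := hc 0 one_pos
    rwa [show (range (2 * 0 + 1)).filter (InFibSet 0) = {0} by decide, sum_singleton] at h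
  | succ m ih =>
    rw [show 2 * (m + 1) + 1 = 2 * m + 1 + 2 by ring] at hc ⊢
    have hold : ∀ x < 2 * m + 1,
        ∑ j ∈ range (2 * m + 1) with InFibSet x j, c j = -c (2 * m + 2) := fun x hx =>
      eq_neg_of_add_eq_zero_left <| sum_range_add_two_inFibSet_of_lt c m hx ▸ hc x (by omega)
    have htop : c (2 * m + 1) = -c (2 * m + 2) :=
      eq_neg_of_add_eq_zero_left <| sum_range_add_two_inFibSet_self c m ▸ hc _ (by omega)
    have hsum : ∑ j ∈ range (2 * m + 1), c j = -c (2 * m + 1) :=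
      eq_neg_of_add_eq_zero_left <| sum_range_add_two_inFibSet_succ c m ▸ hc _ (by omega)
    -- On the old points `c` has the constant sums `-c (2m + 2)`, so there it is
    -- `-c (2m + 2) / F_{2m+1}` times the weights; the equations at the two new points then force `c (2m + 2) = 0`.
    have hd := ih (fun j => fib (2 * m + 1) * c j + c (2 * m + 2) * fibWeight j) fun x hx => by
      have hw : ∑ j ∈ range (2 * m + 1) with InFibSet x j, (fibWeight j : ℝ) =
          fib (2 * m + 1) := by
        exact_mod_cast sum_fibWeight_inFibSet m hx
      rw [sum_add_distrib, ← mul_sum, ← mul_sum, hw, hold x hx]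
      ring
    have htotal : fib (2 * m + 1) * ∑ j ∈ range (2 * m + 1), c j +
        c (2 * m + 2) * fib (2 * m + 2) = 0 := by
      have hw : ∑ j ∈ range (2 * m + 1), (fibWeight j : ℝ) = fib (2 * m + 2) := by
        exact_mod_cast sum_range_fibWeight (2 * m)
      rw [← hw, mul_sum, mul_sum, ← sum_add_distrib]
      exact sum_eq_zero fun j hj => hd j (mem_range.1 hj)
    have hF : (0 : ℝ) < fib (2 * m + 1) := by exact_mod_cast fib_pos.2 (by omega)
    have hlast : c (2 * m + 2) = 0 := by
      rw [hsum, htop] at htotal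
      have : c (2 * m + 2) * (fib (2 * m + 1) + fib (2 * m + 2)) = 0 := by linarith
      exact (mul_eq_zero.1 this).resolve_right (by positivity)
    intro j hj
    rcases (by omega : j < 2 * m + 1 ∨ j = 2 * m + 1 ∨ j = 2 * m + 2) with hj | rfl | rfl
    · have := hd j hj
      rw [hlast, zero_mul, add_zero] at this
      exact (mul_eq_zero.1 this).resolve_left hF.ne'
    · rw [htop, hlast, neg_zero]
    · exact hlast

def fibFamily (n : ℕ) (j : Fin n) : Finset (Fin n) := univ.filter fun x => InFibSet x j

noncomputable def fibMechanism (n : ℕ) : Finset (Fin n) → ℝ :=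
  familyMechanism (fibFamily n) fun j => fibWeight j / fib n

theorem sum_fibFamily {n : ℕ} (f : ℕ → ℝ) (x : Fin n) :
    ∑ j with x ∈ fibFamily n j, f j = ∑ j ∈ range n with InFibSet x j, f j := by
  simp only [fibFamily, mem_filter, mem_univ, true_and, sum_filter]
  exact Fin.sum_univ_eq_sum_range (fun j => if InFibSet x j then f j else 0) n

theorem linearIndependent_fibFamily (m : ℕ) :
    LinearIndependent ℝ fun j x => if x ∈ fibFamily (2 * m + 1) j then (1 : ℝ) else 0 := by
  rw [linearIndependent_indicator_iff]
  intro c hc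
  let c' : ℕ → ℝ := fun j => if h : j < 2 * m + 1 then c ⟨j, h⟩ else 0
  have hcc' : ∀ j : Fin (2 * m + 1), c j = c' j := fun j => by simp only [c', dif_pos j.2]
  have hc' := eq_zero_of_sum_inFibSet_eq_zero m c' fun x hx => by
    rw [← sum_fibFamily c' ⟨x, hx⟩, ← hc ⟨x, hx⟩]
    simp only [hcc']
  funext j
  rw [hcc', Pi.zero_apply, hc' j j.2]

theorem isExtremeCAR_fibMechanism (m : ℕ) : IsExtremeCAR (fibMechanism (2 * m + 1)) := by
  have hF : (0 : ℝ) < fib (2 * m + 1) := by exact_mod_cast fib_pos.2 (by omega)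
  refine isExtremeCAR_familyMechanism (linearIndependent_fibFamily m)
    (fun j => div_pos (by exact_mod_cast fibWeight_pos j) hF) fun x => ?_
  rw [sum_fibFamily (fun j => (fibWeight j : ℝ) / fib (2 * m + 1)), ← sum_div,
    div_eq_one_iff_eq hF.ne']
  exact_mod_cast sum_fibWeight_inFibSet m x.2

theorem fib_mul_fibMechanism_eq_natCast {n : ℕ} (hn : 0 < n) (A : Finset (Fin n)) :
    (fib n : ℝ) * fibMechanism n A = (∑ j with fibFamily n j = A, fibWeight j : ℕ) := by
  have hF : (fib n : ℝ) ≠ 0 := by exact_mod_cast (fib_pos.2 hn).ne'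
  rw [fibMechanism, familyMechanism, mul_sum, Nat.cast_sum]
  exact sum_congr rfl fun j _ => mul_div_cancel₀ _ hF

theorem fibMechanism_fibFamily_zero (m : ℕ) :
    fibMechanism (2 * m + 1) (fibFamily (2 * m + 1) 0) = (fib (2 * m + 1) : ℝ)⁻¹ := by
  rw [fibMechanism, familyMechanism_apply_of_injective
    (fun i j hij => (linearIndependent_fibFamily m).injective (by simp only [hij]))]
  simp [fibWeight]

theorem extreme_car_height_fib_general (n : ℕ) (hn : Odd n) :
    ∃ π : Finset (Fin n) → ℝ, IsExtremeCAR π ∧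
      IsLeast {k : ℕ | 0 < k ∧ ∀ A : Finset (Fin n), ∃ z : ℤ, (k : ℝ) * π A = (z : ℝ)}
        (Nat.fib n) := by
  obtain ⟨m, rfl⟩ := hn
  refine ⟨fibMechanism (2 * m + 1), isExtremeCAR_fibMechanism m,
    isLeast_pos_int_multiplier _ (fib_pos.2 (by omega)) (fun A => ?_)
      (fibMechanism_fibFamily_zero m)⟩
  exact ⟨_, (fib_mul_fibMechanism_eq_natCast (by omega) A).trans (Int.cast_natCast _).symm⟩

/-- Exponential lower bound on the maximal height of extreme CAR mechanisms: for every
odd `n > 0` there is an extreme CAR mechanism `π` on a set of `n` elements such that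
the smallest positive integer `k` with `k · π A ∈ ℤ` for all `A` is the Fibonacci
number `F_n` (`Nat.fib`, with `F_1 = F_2 = 1`). -/
theorem extreme_car_height_fib (n : ℕ) (hn : Odd n) (hpos : 0 < n) :
    ∃ π : Finset (Fin n) → ℝ, IsExtremeCAR π ∧
      IsLeast {k : ℕ | 0 < k ∧ ∀ A : Finset (Fin n), ∃ z : ℤ, (k : ℝ) * π A = (z : ℝ)}
        (Nat.fib n) :=
  extreme_car_height_fib_general n hn
end
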